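/- The sequence a_n = 2^{−n/2} ( (2^{n+1} − 2^n) ln 2 − 2(2^{n−1}+1) ln(2^{n−1}+1) + 3(2^n+1) ln(2^n+1) − (2^{n+1}+1) ln(2^{n+1}+1) ), n ≥ 0, is strictly positive, strictly decreasing, converges to 0 as n → ∞, and the series Σ_{n=0}^∞ a_n converges. -/

import Mathlib

/-- The closed-form sequence
`a_n = 2^{-n/2} ((2^{n+1} - 2^n) ln 2 - 2(2^{n-1}+1) ln(2^{n-1}+1)
  + 3(2^n+1) ln(2^n+1) - (2^{n+1}+1) ln(2^{n+1}+1))`. -/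
noncomputable def aForm (n : ℕ) : ℝ :=
  (2 : ℝ) ^ (-(n : ℝ) / 2) *
    (((2 : ℝ) ^ ((n : ℤ) + 1) - (2 : ℝ) ^ (n : ℤ)) * Real.log 2
      - 2 * ((2 : ℝ) ^ ((n : ℤ) - 1) + 1) * Real.log ((2 : ℝ) ^ ((n : ℤ) - 1) + 1)
      + 3 * ((2 : ℝ) ^ (n : ℤ) + 1) * Real.log ((2 : ℝ) ^ (n : ℤ) + 1)
      - ((2 : ℝ) ^ ((n : ℤ) + 1) + 1) * Real.log ((2 : ℝ) ^ ((n : ℤ) + 1) + 1))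

open Real Set Finset

/-! Auxiliary functions and lemmas -/

noncomputable def Ff (s : ℝ) : ℝ := (s+1) * Real.log (2*s+2) - (s+1/2) * Real.log (2*s+1)

lemma Ff_deriv {s : ℝ} (hs : (0:ℝ) ≤ s) :
    HasDerivAt Ff (Real.log (2*s+2) - Real.log (2*s+1)) s := by
  have h1 : (2*s+2) ≠ 0 := by nlinarith
  have h2 : (2*s+1) ≠ 0 := by nlinarith
  have d1 : HasDerivAt (fun x : ℝ => 2*x+2) 2 s := by
    simpa using ((hasDerivAt_id s).const_mul 2).add_const 2
  have d2 : HasDerivAt (fun x : ℝ => 2*x+1) 2 s := by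
    simpa using ((hasDerivAt_id s).const_mul 2).add_const 1
  have da : HasDerivAt (fun x : ℝ => (x+1) * Real.log (2*x+2))
      (1 * Real.log (2*s+2) + (s+1) * (2/(2*s+2))) s :=
    ((hasDerivAt_id s).add_const 1).mul (d1.log h1)
  have db : HasDerivAt (fun x : ℝ => (x+1/2) * Real.log (2*x+1))
      (1 * Real.log (2*s+1) + (s+1/2) * (2/(2*s+1))) s :=
    ((hasDerivAt_id s).add_const (1/2:ℝ)).mul (d2.log h2)
  refine (da.sub db).congr_deriv ?_
  field_simp
  ring

lemma Ff_mono : StrictMonoOn Ff (Ici (0:ℝ)) := by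
  apply strictMonoOn_of_hasDerivWithinAt_pos (convex_Ici 0)
    (fun x hx => (Ff_deriv hx).continuousAt.continuousWithinAt)
    (f' := fun x => Real.log (2*x+2) - Real.log (2*x+1))
    (fun x hx => (Ff_deriv (le_of_lt (by simpa using hx))).hasDerivWithinAt)
  intro x hx
  rw [interior_Ici] at hx
  have hx : (0:ℝ) < x := hx
  have := Real.log_lt_log (by linarith : (0:ℝ) < 2*x+1) (by linarith : 2*x+1 < 2*x+2)
  linarith

noncomputable def Hf (s : ℝ) : ℝ := Ff s - (1/2) * Real.log (2*s+1)

lemma Hf_anti : StrictAntiOn Hf (Ici (0:ℝ)) := by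
  have hd : ∀ x : ℝ, 0 ≤ x → HasDerivAt Hf
      (Real.log (2*x+2) - Real.log (2*x+1) - 1/(2*x+1)) x := by
    intro x hx
    have h2 : (2*x+1) ≠ 0 := by nlinarith
    have d2 : HasDerivAt (fun y : ℝ => 2*y+1) 2 x := by
      simpa using ((hasDerivAt_id x).const_mul 2).add_const 1
    have := (Ff_deriv hx).sub (((d2.log h2)).const_mul (1/2:ℝ))
    refine this.congr_deriv ?_
    field_simp
  apply strictAntiOn_of_hasDerivWithinAt_neg (convex_Ici 0)
    (fun x hx => (hd x hx).continuousAt.continuousWithinAt)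
    (f' := fun x => Real.log (2*x+2) - Real.log (2*x+1) - 1/(2*x+1))
    (fun x hx => (hd x (le_of_lt (by rwa [interior_Ici] at hx))).hasDerivWithinAt)
  intro x hx
  rw [interior_Ici] at hx
  have hx : (0:ℝ) < x := hx
  have h1 : (0:ℝ) < 2*x+1 := by linarith
  have key : Real.log ((2*x+2)/(2*x+1)) < (2*x+2)/(2*x+1) - 1 := by
    apply Real.log_lt_sub_one_of_pos (by positivity)
    intro h
    rw [div_eq_one_iff_eq (by linarith)] at h
    linarith
  rw [Real.log_div (by linarith) (by linarith)] at key
  have h3 : (2*x+2)/(2*x+1) - 1 = 1/(2*x+1) := by field_simp; ring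
  linarith [h3 ▸ key]

noncomputable def Kf (s : ℝ) : ℝ := Ff (2*s) - Ff s

lemma Kf_mono : StrictMonoOn Kf (Ici (0:ℝ)) := by
  have hd : ∀ x : ℝ, 0 ≤ x → HasDerivAt Kf
      (2*(Real.log (4*x+2) - Real.log (4*x+1)) - (Real.log (2*x+2) - Real.log (2*x+1))) x := by
    intro x hx
    have d0 : HasDerivAt (fun y : ℝ => 2*y) 2 x := by
      simpa using (hasDerivAt_id x).const_mul 2
    have dc : HasDerivAt (fun y : ℝ => Ff (2*y))
        ((Real.log (2*(2*x)+2) - Real.log (2*(2*x)+1)) * 2) x :=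
      (Ff_deriv (by linarith : (0:ℝ) ≤ 2*x)).comp x d0
    have := dc.sub (Ff_deriv hx)
    refine this.congr_deriv ?_
    ring_nf
  apply strictMonoOn_of_hasDerivWithinAt_pos (convex_Ici 0)
    (fun x hx => (hd x hx).continuousAt.continuousWithinAt)
    (f' := fun x => 2*(Real.log (4*x+2) - Real.log (4*x+1)) - (Real.log (2*x+2) - Real.log (2*x+1)))
    (fun x hx => (hd x (le_of_lt (by rwa [interior_Ici] at hx))).hasDerivWithinAt)
  intro x hx
  rw [interior_Ici] at hx
  have hx : (0:ℝ) < x := hx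
  have e1 : 2*Real.log (4*x+2) + Real.log (2*x+1) = Real.log ((4*x+2)^2*(2*x+1)) := by
    rw [Real.log_mul (by positivity) (by positivity), Real.log_pow]
    push_cast; ring
  have e2 : Real.log (2*x+2) + 2*Real.log (4*x+1) = Real.log ((2*x+2)*(4*x+1)^2) := by
    rw [Real.log_mul (by positivity) (by positivity), Real.log_pow]
    push_cast; ring
  have key : Real.log ((2*x+2)*(4*x+1)^2) < Real.log ((4*x+2)^2*(2*x+1)) := by
    apply Real.log_lt_log (by positivity)
    nlinarith
  rw [← e1, ← e2] at key
  linarith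

/-! Numeric bounds on logarithms -/

lemma log_three_halves_bounds :
    0.40546506 < Real.log (3/2) ∧ Real.log (3/2) < 0.40546516 := by
  have t : |(1/3 : ℝ)| = 1/3 := by rw [abs_of_pos]; norm_num
  have z := Real.abs_log_sub_add_sum_range_le (show |(1/3:ℝ)| < 1 by rw [t]; norm_num) 15
  rw [t] at z
  have e : (1:ℝ) - 1/3 = (3/2)⁻¹ := by norm_num
  rw [e, Real.log_inv, ← sub_eq_add_neg] at z
  have S : (∑ i ∈ Finset.range 15, ((1:ℝ)/3)^(i+1)/(i+1)) = 19967311127/49245448824 := by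
    simp_rw [Finset.sum_range_succ, Finset.sum_range_zero]; norm_num
  rw [S] at z
  have eb : ((1:ℝ)/3)^(15+1)/(1-1/3) ≤ 0.000000035 := by norm_num
  have z1 := (abs_sub_le_iff.1 z).1
  have z2 := (abs_sub_le_iff.1 z).2
  constructor <;> nlinarith [z1, z2, eb]

lemma log_five_fourths_bounds :
    0.22314352 < Real.log (5/4) ∧ Real.log (5/4) < 0.22314358 := by
  have t : |(1/5 : ℝ)| = 1/5 := by rw [abs_of_pos]; norm_num
  have z := Real.abs_log_sub_add_sum_range_le (show |(1/5:ℝ)| < 1 by rw [t]; norm_num) 10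
  rw [t] at z
  have e : (1:ℝ) - 1/5 = (5/4)⁻¹ := by norm_num
  rw [e, Real.log_inv, ← sub_eq_add_neg] at z
  have S : (∑ i ∈ Finset.range 10, ((1:ℝ)/5)^(i+1)/(i+1)) = 5491423277/24609375000 := by
    simp_rw [Finset.sum_range_succ, Finset.sum_range_zero]; norm_num
  rw [S] at z
  have eb : ((1:ℝ)/5)^(10+1)/(1-1/5) ≤ 0.000000026 := by norm_num
  have z1 := (abs_sub_le_iff.1 z).1
  have z2 := (abs_sub_le_iff.1 z).2
  constructor <;> nlinarith [z1, z2, eb]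

lemma log_three_bounds : 1.09861224 < Real.log 3 ∧ Real.log 3 < 1.09861237 := by
  have e : (3:ℝ) = 2 * (3/2) := by norm_num
  have h : Real.log 3 = Real.log 2 + Real.log (3/2) := by
    rw [e, Real.log_mul (by norm_num) (by norm_num)]; norm_num
  obtain ⟨h1, h2⟩ := log_three_halves_bounds
  constructor <;> [nlinarith [Real.log_two_gt_d9, h1, h]; nlinarith [Real.log_two_lt_d9, h2, h]]

lemma log_five_bounds : 1.60943788 < Real.log 5 ∧ Real.log 5 < 1.60943795 := by
  have e : (5:ℝ) = 2 * (2 * (5/4)) := by norm_num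
  have h : Real.log 5 = Real.log 2 + (Real.log 2 + Real.log (5/4)) := by
    rw [e, Real.log_mul (by norm_num) (by norm_num), Real.log_mul (by norm_num) (by norm_num)]
    norm_num
  obtain ⟨h1, h2⟩ := log_five_fourths_bounds
  constructor <;> [nlinarith [Real.log_two_gt_d9, h1, h]; nlinarith [Real.log_two_lt_d9, h2, h]]

noncomputable def gSeq (n : ℕ) : ℝ := 2 * (Ff ((2:ℝ)^n) - Ff ((2:ℝ)^n / 2))

lemma aForm_eq (n : ℕ) : aForm n = (2:ℝ) ^ (-(n:ℝ)/2) * gSeq n := by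
  have y_pos : (0:ℝ) < (2:ℝ)^n := by positivity
  set y : ℝ := (2:ℝ)^n with hy
  have h0 : (2:ℝ)^(n:ℤ) = y := by rw [hy]; exact_mod_cast zpow_natCast (2:ℝ) n
  have h1 : (2:ℝ)^((n:ℤ)+1) = 2*y := by
    rw [zpow_add₀ (two_ne_zero) (n:ℤ) 1, h0, zpow_one]; ring
  have h2 : (2:ℝ)^((n:ℤ)-1) = y/2 := by
    rw [zpow_sub₀ (two_ne_zero) (n:ℤ) 1, h0, zpow_one]
  have e1 : Real.log (2*y+2) = Real.log 2 + Real.log (y+1) := by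
    rw [show 2*y+2 = 2*(y+1) by ring, Real.log_mul two_ne_zero (by positivity)]
  have e2 : Real.log (y/2+1) = Real.log (y+2) - Real.log 2 := by
    rw [show y/2+1 = (y+2)/2 by ring, Real.log_div (by positivity) two_ne_zero]
  have e3 : 2*(y/2)+2 = y+2 := by ring
  have e4 : 2*(y/2)+1 = y+1 := by ring
  rw [aForm, gSeq, Ff, Ff, h0, h1, h2, e2, e3, e4, e1]
  ring

lemma gSeq_pos (n : ℕ) : 0 < gSeq n := by
  have y_pos : (0:ℝ) < (2:ℝ)^n := by positivity
  have h := Ff_mono (by positivity : (0:ℝ) ≤ (2:ℝ)^n/2)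
    (le_of_lt y_pos) (by linarith : (2:ℝ)^n/2 < (2:ℝ)^n)
  unfold gSeq
  linarith

lemma gSeq_lt_log_two (n : ℕ) : gSeq n < Real.log 2 := by
  have y_pos : (0:ℝ) < (2:ℝ)^n := by positivity
  set y : ℝ := (2:ℝ)^n with hy
  have h := Hf_anti (by positivity : (0:ℝ) ≤ y/2) (le_of_lt y_pos)
    (by linarith : y/2 < y)
  unfold Hf at h
  rw [show 2*(y/2)+1 = y+1 by ring] at h
  have h2 : Real.log (2*y+1) < Real.log 2 + Real.log (y+1) := by
    rw [← Real.log_mul two_ne_zero (by positivity)]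
    exact Real.log_lt_log (by positivity) (by linarith)
  unfold gSeq
  linarith

lemma gSeq_mono : StrictMono gSeq := by
  apply strictMono_nat_of_lt_succ
  intro n
  have y_pos : (0:ℝ) < (2:ℝ)^n := by positivity
  have hlt : (2:ℝ)^n/2 < (2:ℝ)^(n+1)/2 := by
    have : (2:ℝ)^n < 2^(n+1) := by
      rw [pow_succ]; nlinarith
    linarith
  have h := Kf_mono (by positivity : (0:ℝ) ≤ (2:ℝ)^n/2)
    (by positivity : (0:ℝ) ≤ (2:ℝ)^(n+1)/2) hlt
  unfold Kf at h
  rw [show 2*((2:ℝ)^n/2) = (2:ℝ)^n by ring,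
    show 2*((2:ℝ)^(n+1)/2) = (2:ℝ)^(n+1) by ring] at h
  unfold gSeq
  linarith

lemma gSeq_zero : gSeq 0 = 10 * Real.log 2 - 6 * Real.log 3 := by
  have h4 : Real.log 4 = 2 * Real.log 2 := by
    rw [show (4:ℝ) = 2^2 by norm_num, Real.log_pow]; push_cast; ring
  unfold gSeq Ff
  norm_num
  rw [h4]
  ring

lemma gSeq_one : gSeq 1 = -2 * Real.log 2 + 9 * Real.log 3 - 5 * Real.log 5 := by
  have h4 : Real.log 4 = 2 * Real.log 2 := by
    rw [show (4:ℝ) = 2^2 by norm_num, Real.log_pow]; push_cast; ring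
  have h6 : Real.log 6 = Real.log 2 + Real.log 3 := by
    rw [show (6:ℝ) = 2*3 by norm_num, Real.log_mul (by norm_num) (by norm_num)]
  unfold gSeq Ff
  norm_num
  rw [h4, h6]
  ring

lemma gSeq_two : gSeq 2 = 4 * Real.log 2 - 24 * Real.log 3 + 15 * Real.log 5 := by
  have h6 : Real.log 6 = Real.log 2 + Real.log 3 := by
    rw [show (6:ℝ) = 2*3 by norm_num, Real.log_mul (by norm_num) (by norm_num)]
  have h9 : Real.log 9 = 2 * Real.log 3 := by
    rw [show (9:ℝ) = 3^2 by norm_num, Real.log_pow]; push_cast; ring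
  have h10 : Real.log 10 = Real.log 2 + Real.log 5 := by
    rw [show (10:ℝ) = 2*5 by norm_num, Real.log_mul (by norm_num) (by norm_num)]
  unfold gSeq Ff
  norm_num
  rw [h6, h9, h10]
  ring

lemma gSeq_step (n : ℕ) : gSeq (n+1) < Real.sqrt 2 * gSeq n := by
  have s2sq : Real.sqrt 2 ^ 2 = 2 := Real.sq_sqrt (by norm_num)
  have s2nn : 0 ≤ Real.sqrt 2 := Real.sqrt_nonneg 2
  have s2a : (1.4142:ℝ) ≤ Real.sqrt 2 := by nlinarith
  obtain ⟨l3a, l3b⟩ := log_three_bounds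
  obtain ⟨l5a, l5b⟩ := log_five_bounds
  have l2a := Real.log_two_gt_d9
  have l2b := Real.log_two_lt_d9
  match n with
  | 0 =>
      have num0 : gSeq 1 < 1.4142 * gSeq 0 := by
        rw [gSeq_zero, gSeq_one]; nlinarith
      nlinarith [gSeq_pos 0]
  | 1 =>
      have num1 : gSeq 2 < 1.4142 * gSeq 1 := by
        rw [gSeq_one, gSeq_two]; nlinarith
      nlinarith [gSeq_pos 1]
  | (m+2) =>
      have num2 : Real.log 2 < 1.414 * gSeq 2 := by
        rw [gSeq_two]; nlinarith
      have hm : gSeq 2 ≤ gSeq (m+2) := gSeq_mono.monotone (by omega)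
      have s2b : (1.414:ℝ) ≤ Real.sqrt 2 := by linarith
      have := gSeq_lt_log_two (m+3)
      nlinarith [gSeq_pos (m+2)]

/-- The sequence `(a_n)` is strictly positive, strictly decreasing, converges to `0`,
and the series `Σ a_n` converges. -/
theorem aForm_pos_strictAnti_tendsto_summable :
    (∀ n, 0 < aForm n) ∧ StrictAnti aForm ∧
      Filter.Tendsto aForm Filter.atTop (nhds 0) ∧ Summable aForm := by
  have hp : ∀ n : ℕ, (0:ℝ) < (2:ℝ)^(-(n:ℝ)/2) := fun n =>
    Real.rpow_pos_of_pos (by norm_num) _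
  have hpos : ∀ n, 0 < aForm n := by
    intro n
    rw [aForm_eq]
    exact mul_pos (hp n) (gSeq_pos n)
  have s2pos : (0:ℝ) < Real.sqrt 2 := Real.sqrt_pos.2 (by norm_num)
  have hanti : StrictAnti aForm := by
    apply strictAnti_nat_of_succ_lt
    intro n
    rw [aForm_eq, aForm_eq]
    have hsplit : (2:ℝ)^(-((n:ℝ)+1)/2) = (2:ℝ)^(-(n:ℝ)/2) * (Real.sqrt 2)⁻¹ := by
      rw [show -((n:ℝ)+1)/2 = -(n:ℝ)/2 + (-(1:ℝ)/2) by ring,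
        Real.rpow_add (by norm_num : (0:ℝ) < 2)]
      congr 1
      rw [show (-(1:ℝ)/2) = -(1/2:ℝ) by ring, Real.rpow_neg (by norm_num : (0:ℝ) ≤ 2),
        ← Real.sqrt_eq_rpow]
    have hcast : (((n:ℕ)+1 : ℕ) : ℝ) = (n:ℝ)+1 := by push_cast; ring
    rw [show -(((n+1 : ℕ)):ℝ)/2 = -((n:ℝ)+1)/2 by rw [hcast], hsplit]
    have key := gSeq_step n
    have h' : (Real.sqrt 2)⁻¹ * gSeq (n+1) < gSeq n := by
      rw [← div_eq_inv_mul, div_lt_iff₀ s2pos]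
      linarith [key]
    calc (2:ℝ)^(-(n:ℝ)/2) * (Real.sqrt 2)⁻¹ * gSeq (n+1)
        = (2:ℝ)^(-(n:ℝ)/2) * ((Real.sqrt 2)⁻¹ * gSeq (n+1)) := by ring
      _ < (2:ℝ)^(-(n:ℝ)/2) * gSeq n := by
          exact mul_lt_mul_of_pos_left h' (hp n)
  have hb : ∀ n : ℕ, aForm n ≤ ((2:ℝ)^(-(1:ℝ)/2))^n := by
    intro n
    rw [aForm_eq]
    have hg1 : gSeq n ≤ 1 := by
      have := gSeq_lt_log_two n
      nlinarith [Real.log_two_lt_d9]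
    have eq : ((2:ℝ)^(-(1:ℝ)/2))^n = (2:ℝ)^(-(n:ℝ)/2) := by
      rw [← Real.rpow_natCast ((2:ℝ)^(-(1:ℝ)/2)) n,
        ← Real.rpow_mul (by norm_num : (0:ℝ) ≤ 2)]
      congr 1
      ring
    rw [eq]
    nlinarith [hp n, gSeq_pos n]
  have hc1 : (2:ℝ)^(-(1:ℝ)/2) < 1 :=
    Real.rpow_lt_one_of_one_lt_of_neg (by norm_num) (by norm_num)
  have hc0 : (0:ℝ) ≤ (2:ℝ)^(-(1:ℝ)/2) := le_of_lt (Real.rpow_pos_of_pos (by norm_num) _)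
  have hgeo : Summable (fun n : ℕ => ((2:ℝ)^(-(1:ℝ)/2))^n) :=
    summable_geometric_of_lt_one hc0 hc1
  have hsum : Summable aForm := hgeo.of_nonneg_of_le (fun n => (hpos n).le) hb
  exact ⟨hpos, hanti, hsum.tendsto_atTop_zero, hsum⟩
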